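/- Every universe level expression is equivalent (under the level equational theory) to a canonical form p ⊔ (n₁ + i₁) ⊔ ... ⊔ (n_m + i_m), where p is a natural number constant, the variables i₁,...,i_m are pairwise distinct, each n_k ≤ p, and n + l abbreviates Sⁿ l. Moreover this canonical form is unique up to associativity and commutativity of ⊔. -/

import Mathlib

/-- Universe level expressions: `l ::= i | 0 | S l | l ⊔ l'`. -/
inductive Lvl : Type
  | var : ℕ → Lvl
  | zero : Lvl
  | succ : Lvl → Lvl
  | max : Lvl → Lvl → Lvl
  deriving DecidableEq

namespace Lvl

/-- Interpretation of a level under an assignment `φ` of naturals to variables: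
`0`, `S` and `⊔` are interpreted as zero, successor and binary maximum on `ℕ`. -/
def eval (φ : ℕ → ℕ) : Lvl → ℕ
  | .var i => φ i
  | .zero => 0
  | .succ l => l.eval φ + 1
  | .max a b => Nat.max (a.eval φ) (b.eval φ)

end Lvl

/-- The equational theory of universe levels: the least congruence (closed under
contexts and under substitution, since the axioms are stated schematically for
arbitrary levels) generated by associativity and commutativity of `⊔`,
distribution of `S` over `⊔`, `l ⊔ S l ≃ S l`, `l ⊔ 0 ≃ l` and `l ⊔ l ≃ l`. -/
inductive LvlEq : Lvl → Lvl → Prop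
  | refl (l : Lvl) : LvlEq l l
  | symm {a b : Lvl} : LvlEq a b → LvlEq b a
  | trans {a b c : Lvl} : LvlEq a b → LvlEq b c → LvlEq a c
  | succ_congr {a b : Lvl} : LvlEq a b → LvlEq (.succ a) (.succ b)
  | max_congr {a b a' b' : Lvl} : LvlEq a b → LvlEq a' b' →
      LvlEq (.max a a') (.max b b')
  | max_assoc (a b c : Lvl) : LvlEq (.max a (.max b c)) (.max (.max a b) c)
  | max_comm (a b : Lvl) : LvlEq (.max a b) (.max b a)
  | succ_max (a b : Lvl) : LvlEq (.succ (.max a b)) (.max (.succ a) (.succ b))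
  | max_succ (a : Lvl) : LvlEq (.max a (.succ a)) (.succ a)
  | max_zero (a : Lvl) : LvlEq (.max a .zero) a
  | max_idem (a : Lvl) : LvlEq (.max a a) a

/-- The constant level `Sⁿ 0`. -/
def Lvl.const (n : ℕ) : Lvl := Lvl.succ^[n] Lvl.zero

/-- The level `n + i`, i.e. `Sⁿ i`. -/
def Lvl.atom (n i : ℕ) : Lvl := Lvl.succ^[n] (Lvl.var i)

/-- The canonical form `p ⊔ (n₁ + i₁) ⊔ ... ⊔ (n_m + i_m)` determined by the
constant coefficient `p` and the list `L` of pairs `(n_k, i_k)`. -/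
def buildCanon (p : ℕ) (L : List (ℕ × ℕ)) : Lvl :=
  L.foldr (fun a acc => Lvl.max (Lvl.atom a.1 a.2) acc) (Lvl.const p)

/-!
Existence: a level is normalized by structural recursion. `S` distributes over a canonical
form, and the join of two canonical forms is canonical once the constants are joined and the
atoms on a common variable merged, since `Sⁿ l ⊔ Sᵐ l ≃ S^(max n m) l`. The bound `n_k ≤ p`
is kept throughout because it holds for `i ≃ i ⊔ 0` and is preserved by `S` and `⊔`.

Uniqueness: `≃` is sound for the interpretation in `(ℕ, 0, +1, max)`. Under the assignment `0`
a canonical form evaluates to `p`, and under the assignment sending only `i` to `p + 1` it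
evaluates to `n + p + 1` if `n + i` is one of its atoms and to `p` if `i` does not occur;
the bound `n_k ≤ p` is what keeps the other atoms invisible.
-/

local infix:50 " ≃ₗ " => LvlEq

namespace Lvl

@[simp] theorem eval_iterate_succ (φ : ℕ → ℕ) (l : Lvl) (n : ℕ) :
    (succ^[n] l).eval φ = l.eval φ + n := by
  induction n with
  | zero => rfl
  | succ n ih => rw [Function.iterate_succ_apply', eval, ih, Nat.add_assoc]

@[simp] theorem eval_const (φ : ℕ → ℕ) (p : ℕ) : (const p).eval φ = p := by
  simp [const, eval]

@[simp] theorem eval_atom (φ : ℕ → ℕ) (n i : ℕ) : (atom n i).eval φ = φ i + n := by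
  simp [atom, eval]

end Lvl

namespace LvlEq

instance : Trans LvlEq LvlEq LvlEq := ⟨LvlEq.trans⟩

theorem eval_eq {a b : Lvl} (h : a ≃ₗ b) (φ : ℕ → ℕ) : a.eval φ = b.eval φ := by
  induction h with
  | refl => rfl
  | symm _ ih => exact ih.symm
  | trans _ _ ih₁ ih₂ => exact ih₁.trans ih₂
  | succ_congr _ ih => simp [Lvl.eval, ih]
  | max_congr _ _ ih₁ ih₂ => simp [Lvl.eval, ih₁, ih₂]
  | max_assoc => exact (Nat.max_assoc _ _ _).symm
  | max_comm => exact Nat.max_comm _ _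
  | succ_max => exact (Nat.succ_max_succ _ _).symm
  | max_succ => exact Nat.max_eq_right (Nat.le_succ _)
  | max_zero => exact Nat.max_eq_left (Nat.zero_le _)
  | max_idem => exact Nat.max_self _

theorem max_left_comm (a b c : Lvl) : Lvl.max a (.max b c) ≃ₗ Lvl.max b (.max a c) :=
  calc Lvl.max a (.max b c)
      ≃ₗ Lvl.max (.max a b) c := max_assoc a b c
    _ ≃ₗ Lvl.max (.max b a) c := (max_comm a b).max_congr (refl c)
    _ ≃ₗ Lvl.max b (.max a c) := (max_assoc b a c).symm

theorem max_succ_of_max {a b : Lvl} (h : Lvl.max a b ≃ₗ b) : Lvl.max a (.succ b) ≃ₗ .succ b :=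
  calc Lvl.max a (.succ b)
      ≃ₗ Lvl.max a (.max b (.succ b)) := (refl a).max_congr (max_succ b).symm
    _ ≃ₗ Lvl.max (.max a b) (.succ b) := max_assoc a b _
    _ ≃ₗ Lvl.max b (.succ b) := h.max_congr (refl _)
    _ ≃ₗ .succ b := max_succ b

theorem max_iterate_succ_self (a : Lvl) (k : ℕ) : Lvl.max a (Lvl.succ^[k] a) ≃ₗ Lvl.succ^[k] a := by
  induction k with
  | zero => exact max_idem a
  | succ k ih => rw [Function.iterate_succ_apply']; exact max_succ_of_max ih

theorem max_iterate_succ_of_le (a : Lvl) {n m : ℕ} (h : n ≤ m) :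
    Lvl.max (Lvl.succ^[n] a) (Lvl.succ^[m] a) ≃ₗ Lvl.succ^[m] a := by
  obtain ⟨k, rfl⟩ := Nat.exists_eq_add_of_le' h
  rw [Function.iterate_add_apply]
  exact max_iterate_succ_self _ k

theorem max_iterate_succ (a : Lvl) (n m : ℕ) :
    Lvl.max (Lvl.succ^[n] a) (Lvl.succ^[m] a) ≃ₗ Lvl.succ^[max n m] a := by
  rcases le_total n m with h | h
  · rw [max_eq_right h]; exact max_iterate_succ_of_le a h
  · rw [max_eq_left h]; exact (max_comm _ _).trans (max_iterate_succ_of_le a h)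

end LvlEq

/-- `buildCanon p [(n₁, i₁), …, (n_m, i_m)]` is a canonical form. -/
def IsCanon (p : ℕ) (L : List (ℕ × ℕ)) : Prop :=
  (∀ a ∈ L, a.1 ≤ p) ∧ (L.map Prod.snd).Nodup

namespace IsCanon

theorem mono {p q : ℕ} {L : List (ℕ × ℕ)} (h : IsCanon p L) (hpq : p ≤ q) : IsCanon q L :=
  ⟨fun a ha => (h.1 a ha).trans hpq, h.2⟩

theorem of_cons {p : ℕ} {a : ℕ × ℕ} {L : List (ℕ × ℕ)} (h : IsCanon p (a :: L)) :
    IsCanon p L :=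
  ⟨fun b hb => h.1 b (List.mem_cons_of_mem a hb), (List.nodup_cons.mp h.2).2⟩

end IsCanon

@[simp] theorem buildCanon_nil (p : ℕ) : buildCanon p [] = Lvl.const p := rfl

@[simp] theorem buildCanon_cons (p : ℕ) (a : ℕ × ℕ) (L : List (ℕ × ℕ)) :
    buildCanon p (a :: L) = .max (Lvl.atom a.1 a.2) (buildCanon p L) := rfl

theorem succ_buildCanon (p : ℕ) (L : List (ℕ × ℕ)) :
    Lvl.succ (buildCanon p L) ≃ₗ buildCanon (p + 1) (L.map fun a => (a.1 + 1, a.2)) := by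
  induction L with
  | nil =>
    simp only [List.map_nil, buildCanon_nil, Lvl.const, Function.iterate_succ_apply']
    exact .refl _
  | cons a L ih =>
    rw [List.map_cons, buildCanon_cons, buildCanon_cons]
    refine (LvlEq.succ_max _ _).trans (LvlEq.max_congr ?_ ih)
    rw [Lvl.atom, Lvl.atom, Function.iterate_succ_apply']
    exact .refl _

theorem max_const_buildCanon (q p : ℕ) (L : List (ℕ × ℕ)) :
    Lvl.max (Lvl.const q) (buildCanon p L) ≃ₗ buildCanon (max q p) L := by
  induction L with
  | nil => exact LvlEq.max_iterate_succ _ q p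
  | cons b L ih => exact (LvlEq.max_left_comm _ _ _).trans ((LvlEq.refl _).max_congr ih)

def insertAtom (a : ℕ × ℕ) : List (ℕ × ℕ) → List (ℕ × ℕ)
  | [] => [a]
  | b :: L => if a.2 = b.2 then (max a.1 b.1, b.2) :: L else b :: insertAtom a L

theorem max_atom_buildCanon (n i p : ℕ) (L : List (ℕ × ℕ)) :
    Lvl.max (Lvl.atom n i) (buildCanon p L) ≃ₗ buildCanon p (insertAtom (n, i) L) := by
  induction L with
  | nil => exact .refl _
  | cons b L ih =>
    obtain ⟨m, j⟩ := b
    by_cases hij : i = j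
    · subst hij
      rw [insertAtom, if_pos rfl, buildCanon_cons, buildCanon_cons]
      exact (LvlEq.max_assoc _ _ _).trans
        ((LvlEq.max_iterate_succ _ n m).max_congr (.refl _))
    · rw [insertAtom, if_neg hij, buildCanon_cons, buildCanon_cons]
      exact (LvlEq.max_left_comm _ _ _).trans ((LvlEq.refl _).max_congr ih)

theorem mem_map_snd_insertAtom (a : ℕ × ℕ) (L : List (ℕ × ℕ)) (j : ℕ) :
    j ∈ (insertAtom a L).map Prod.snd ↔ j = a.2 ∨ j ∈ L.map Prod.snd := by
  induction L with
  | nil => simp [insertAtom]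
  | cons b L ih =>
    by_cases h : a.2 = b.2
    · rw [insertAtom, if_pos h]
      simp only [List.map_cons, List.mem_cons, h]
      tauto
    · simp only [insertAtom, if_neg h, List.map_cons, List.mem_cons, ih]
      tauto

theorem IsCanon.insertAtom {p : ℕ} {a : ℕ × ℕ} {L : List (ℕ × ℕ)} (ha : a.1 ≤ p)
    (hL : IsCanon p L) : IsCanon p (insertAtom a L) := by
  induction L with
  | nil => simpa [IsCanon, _root_.insertAtom] using ha
  | cons b L ih =>
    have hb : b.1 ≤ p := hL.1 b List.mem_cons_self
    obtain ⟨hbL, hnd⟩ := List.nodup_cons.mp (List.map_cons ▸ hL.2)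
    by_cases hab : a.2 = b.2
    · rw [_root_.insertAtom, if_pos hab]
      refine ⟨?_, ?_⟩
      · simpa [max_le_iff, ha, hb] using hL.of_cons.1
      · exact List.nodup_cons.mpr ⟨hbL, hnd⟩
    · rw [_root_.insertAtom, if_neg hab]
      obtain ⟨ihb, ihnd⟩ := ih hL.of_cons
      refine ⟨by simpa [hb] using ihb, List.nodup_cons.mpr ⟨?_, ihnd⟩⟩
      rw [mem_map_snd_insertAtom]
      rintro (h | h)
      exacts [hab h.symm, hbL h]

def mergeAtoms (La Lb : List (ℕ × ℕ)) : List (ℕ × ℕ) := La.foldr insertAtom Lb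

theorem max_buildCanon (pa pb : ℕ) (La Lb : List (ℕ × ℕ)) :
    Lvl.max (buildCanon pa La) (buildCanon pb Lb)
      ≃ₗ buildCanon (max pa pb) (mergeAtoms La Lb) := by
  induction La with
  | nil => exact max_const_buildCanon pa pb Lb
  | cons a La ih =>
    calc Lvl.max (buildCanon pa (a :: La)) (buildCanon pb Lb)
        ≃ₗ Lvl.max (Lvl.atom a.1 a.2) (.max (buildCanon pa La) (buildCanon pb Lb)) :=
          (LvlEq.max_assoc _ _ _).symm
      _ ≃ₗ Lvl.max (Lvl.atom a.1 a.2) (buildCanon (max pa pb) (mergeAtoms La Lb)) :=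
          (LvlEq.refl _).max_congr ih
      _ ≃ₗ buildCanon (max pa pb) (mergeAtoms (a :: La) Lb) := max_atom_buildCanon _ _ _ _

theorem IsCanon.mergeAtoms {pa pb : ℕ} {La Lb : List (ℕ × ℕ)} (ha : IsCanon pa La)
    (hb : IsCanon pb Lb) : IsCanon (max pa pb) (mergeAtoms La Lb) := by
  induction La with
  | nil => exact hb.mono (le_max_right _ _)
  | cons a La ih =>
    exact (ih ha.of_cons).insertAtom ((ha.1 a List.mem_cons_self).trans (le_max_left _ _))

def Lvl.normalize : Lvl → ℕ × List (ℕ × ℕ)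
  | .var i => (0, [(0, i)])
  | .zero => (0, [])
  | .succ l => (l.normalize.1 + 1, l.normalize.2.map fun a => (a.1 + 1, a.2))
  | .max a b => (Max.max a.normalize.1 b.normalize.1, mergeAtoms a.normalize.2 b.normalize.2)

theorem Lvl.isCanon_normalize (l : Lvl) : IsCanon l.normalize.1 l.normalize.2 := by
  induction l with
  | var i => simp [IsCanon, normalize]
  | zero => simp [IsCanon, normalize]
  | succ l ih =>
    refine ⟨?_, ?_⟩
    · simp only [normalize, List.mem_map]
      rintro _ ⟨a, ha, rfl⟩
      exact Nat.succ_le_succ (ih.1 a ha)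
    · simpa [normalize, List.map_map, Function.comp_def] using ih.2
  | max a b iha ihb => exact iha.mergeAtoms ihb

theorem Lvl.lvlEq_buildCanon_normalize (l : Lvl) : l ≃ₗ buildCanon l.normalize.1 l.normalize.2 := by
  induction l with
  | var i => exact (LvlEq.max_zero _).symm
  | zero => exact .refl _
  | succ l ih => exact ih.succ_congr.trans (succ_buildCanon _ _)
  | max a b iha ihb => exact (iha.max_congr ihb).trans (max_buildCanon _ _ _ _)

namespace IsCanon

variable {p : ℕ} {L : List (ℕ × ℕ)}

theorem eval_zero (h : IsCanon p L) : (buildCanon p L).eval 0 = p := by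
  induction L with
  | nil => simp
  | cons a L ih =>
    simp only [buildCanon_cons, Lvl.eval, Lvl.eval_atom, ih h.of_cons, Pi.zero_apply, zero_add]
    exact Nat.max_eq_right (h.1 a List.mem_cons_self)

theorem eval_single_of_not_mem (h : IsCanon p L) {i : ℕ} (hi : i ∉ L.map Prod.snd) :
    (buildCanon p L).eval (Pi.single i (p + 1)) = p := by
  induction L with
  | nil => simp
  | cons a L ih =>
    simp only [List.map_cons, List.mem_cons, not_or] at hi
    simp only [buildCanon_cons, Lvl.eval, Lvl.eval_atom, ih h.of_cons hi.2,
      Pi.single_apply, if_neg (Ne.symm hi.1), zero_add]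
    exact Nat.max_eq_right (h.1 a List.mem_cons_self)

theorem eval_single_of_mem (h : IsCanon p L) {n i : ℕ} (hni : (n, i) ∈ L) :
    (buildCanon p L).eval (Pi.single i (p + 1)) = p + 1 + n := by
  induction L with
  | nil => simp at hni
  | cons a L ih =>
    obtain ⟨haL, hnd⟩ := List.nodup_cons.mp (List.map_cons ▸ h.2)
    rcases List.mem_cons.mp hni with rfl | hmem
    · simp only [buildCanon_cons, Lvl.eval, Lvl.eval_atom, Pi.single_eq_same,
        h.of_cons.eval_single_of_not_mem haL]
      exact Nat.max_eq_left (by omega)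
    · have hai : a.2 ≠ i := fun hai => haL (hai ▸ List.mem_map_of_mem hmem)
      simp only [buildCanon_cons, Lvl.eval, Lvl.eval_atom, ih h.of_cons hmem,
        Pi.single_apply, if_neg hai, zero_add]
      exact Nat.max_eq_right (by have := h.1 a List.mem_cons_self; omega)

theorem mem_of_eval_eq {L' : List (ℕ × ℕ)} (h : IsCanon p L) (h' : IsCanon p L')
    (heval : ∀ φ, (buildCanon p L).eval φ = (buildCanon p L').eval φ)
    {n i : ℕ} (hni : (n, i) ∈ L) : (n, i) ∈ L' := by
  have hv := heval (Pi.single i (p + 1))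
  rw [h.eval_single_of_mem hni] at hv
  by_cases hi : i ∈ L'.map Prod.snd
  · obtain ⟨⟨m, j⟩, hmj, rfl⟩ := List.mem_map.mp hi
    rw [h'.eval_single_of_mem hmj] at hv
    obtain rfl : n = m := by omega
    exact hmj
  · rw [h'.eval_single_of_not_mem hi] at hv
    omega

theorem eq_of_eval_eq {p' : ℕ} {L' : List (ℕ × ℕ)} (h : IsCanon p L) (h' : IsCanon p' L')
    (heval : ∀ φ, (buildCanon p L).eval φ = (buildCanon p' L').eval φ) :
    p = p' ∧ L.toFinset = L'.toFinset := by
  obtain rfl : p = p' := by rw [← h.eval_zero, ← h'.eval_zero, heval]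
  refine ⟨rfl, Finset.ext fun ⟨n, i⟩ => ?_⟩
  simp only [List.mem_toFinset]
  exact ⟨h.mem_of_eval_eq h' heval, h'.mem_of_eval_eq h fun φ => (heval φ).symm⟩

end IsCanon

/-- Every level is equivalent to a canonical form `p ⊔ (n₁+i₁) ⊔ ... ⊔ (n_m+i_m)`
with pairwise distinct variables and all `n_k ≤ p`; moreover the canonical form is
unique up to associativity and commutativity of `⊔` (i.e. the constant coefficient
is unique and the set of summands `(n_k, i_k)` is unique). -/
theorem exists_unique_canonical_form (l : Lvl) :
    ∃ (p : ℕ) (L : List (ℕ × ℕ)),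
      (∀ a ∈ L, a.1 ≤ p) ∧ (L.map Prod.snd).Nodup ∧ LvlEq l (buildCanon p L) ∧
      ∀ (p' : ℕ) (L' : List (ℕ × ℕ)),
        (∀ a ∈ L', a.1 ≤ p') → (L'.map Prod.snd).Nodup → LvlEq l (buildCanon p' L') →
        p' = p ∧ L'.toFinset = L.toFinset := by
  obtain ⟨hbound, hnodup⟩ := l.isCanon_normalize
  have hl := l.lvlEq_buildCanon_normalize
  refine ⟨_, _, hbound, hnodup, hl, fun p' L' hbound' hnodup' hl' => ?_⟩
  exact IsCanon.eq_of_eval_eq ⟨hbound', hnodup'⟩ ⟨hbound, hnodup⟩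
    fun φ => (hl'.eval_eq φ).symm.trans (hl.eval_eq φ)
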